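/- arXiv:2010.13139 — 10 statements merged into one kernel-verified Lean document; each statement's English description precedes it below -/
import Mathlib

section
/- If U is uniform on (0,1), the Tsallis entropy of the MRSSU sample of size n from U equals S_α(U_MRSSU) = (1/(α−1)) ( 1 − (n!)^α / ∏_{i=1}^n (1 + α(i−1)) ). -/
open MeasureTheory Set Finset

/-! The `i`-th factor integrates the `α`-th power of the density `(i+1) x^i` of the maximum of
`i+1` uniforms: `∫₀¹ ((i+1) x^i)^α = (i+1)^α / (iα+1)`. The numerators multiply to `(n!)^α`,
and `1/(1-α) = -1/(α-1)` turns `P - 1` into `1 - P`. -/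

theorem integral_const_mul_pow_rpow {c α : ℝ} (hc : 0 ≤ c) {k : ℕ}
    (hkα : -1 < (k : ℝ) * α) :
    ∫ x in (0 : ℝ)..1, (c * x ^ k) ^ α = c ^ α / ((k : ℝ) * α + 1) := by
  have hpow : ∀ x ∈ uIcc (0 : ℝ) 1, (c * x ^ k) ^ α = c ^ α * x ^ ((k : ℝ) * α) := by
    intro x hx
    have hx0 : 0 ≤ x := by rw [Set.uIcc_of_le zero_le_one] at hx; exact hx.1
    rw [Real.mul_rpow hc (by positivity), ← Real.rpow_natCast x k, ← Real.rpow_mul hx0]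
  rw [intervalIntegral.integral_congr hpow, intervalIntegral.integral_const_mul,
    integral_rpow (Or.inl hkα), Real.one_rpow, Real.zero_rpow (by linarith)]
  ring

theorem prod_range_add_one_rpow_eq_factorial_rpow (n : ℕ) (α : ℝ) :
    ∏ i ∈ range n, ((i : ℝ) + 1) ^ α = (n.factorial : ℝ) ^ α := by
  rw [Real.finsetProd_rpow _ _ fun i _ => by positivity, ← prod_range_add_one_eq_factorial]
  push_cast
  rfl

theorem tsallis_entropy_mrssu_uniform_general
    (α : ℝ) (n : ℕ) (hα : 0 < α) :
    (1 / (1 - α)) *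
      ((∏ i ∈ Finset.range n,
        ∫ x in (0:ℝ)..1, (((i : ℝ) + 1) * x ^ (i : ℕ)) ^ α) - 1)
    = (1 / (α - 1)) *
      (1 - (n.factorial : ℝ) ^ α / ∏ i ∈ Finset.range n, (1 + α * (i : ℝ))) := by
  have hfactor (i : ℕ) : ∫ x in (0:ℝ)..1, (((i : ℝ) + 1) * x ^ i) ^ α
      = ((i : ℝ) + 1) ^ α / (1 + α * i) := by
    rw [integral_const_mul_pow_rpow (by positivity) (by nlinarith [i.cast_nonneg (α := ℝ)])]
    ring_nf
  simp_rw [hfactor, prod_div_distrib, prod_range_add_one_rpow_eq_factorial_rpow, ← neg_sub α 1,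
    one_div_neg_eq_neg_one_div]
  ring

/-- Tsallis entropy of the MRSSU sample of size `n` from a uniform(0,1) population:
`S_α(U_MRSSU) = (1/(α−1)) (1 − (n!)^α / ∏_{i=1}^n (1 + α(i−1)))`. -/
theorem tsallis_entropy_mrssu_uniform
    (α : ℝ) (n : ℕ) (hα : 0 < α) (hα1 : α ≠ 1) :
    (1 / (1 - α)) *
      ((∏ i ∈ Finset.range n,
        ∫ x in (0:ℝ)..1, (((i : ℝ) + 1) * x ^ (i : ℕ)) ^ α) - 1)
    = (1 / (α - 1)) *
      (1 - (n.factorial : ℝ) ^ α / ∏ i ∈ Finset.range n, (1 + α * (i : ℝ))) :=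
  tsallis_entropy_mrssu_uniform_general α n hα
end

section
/- If Z is exponential with rate θ, the Tsallis entropy of the MRSSU sample of size n equals S_α(Z_MRSSU) = (1/(α−1)) ( 1 − θ^{n(α−1)} Γ(α)^n ∏_{i=1}^n [ Γ(α(i−1)+1) i^α / Γ(αi+1) ] ). -/
/-!
Under the substitution `u = exp (-θ x)` the `i`-th factor of the product becomes
`θ ^ (α - 1) (i + 1) ^ α B(α, α i + 1)`, and the real Beta integral is evaluated through
`B(s, t) = Γ(s) Γ(t) / Γ(s + t)`.
-/

open MeasureTheory Set Real

lemma image_exp_neg_mul_Ioi {θ : ℝ} (hθ : 0 < θ) :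
    (fun x ↦ exp (-θ * x)) '' Ioi 0 = Ioo 0 1 := by
  have himage : (fun x ↦ -θ * x) '' Ioi 0 = Iio 0 := by
    ext y
    refine ⟨?_, fun hy ↦ ⟨-y / θ, div_pos (neg_pos.2 hy) hθ, by field_simp⟩⟩
    rintro ⟨x, hx, rfl⟩
    exact mul_neg_of_neg_of_pos (neg_neg_of_pos hθ) hx
  rw [← exp_zero, ← image_exp_Iio, ← himage, image_image]

lemma integral_Ioi_comp_exp_neg_mul {E : Type*} [NormedAddCommGroup E] [NormedSpace ℝ E]
    {θ : ℝ} (hθ : 0 < θ) (g : ℝ → E) :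
    ∫ x in Ioi 0, (θ * exp (-θ * x)) • g (exp (-θ * x)) = ∫ u in Ioo 0 1, g u := by
  have hderiv : ∀ x ∈ Ioi (0 : ℝ),
      HasDerivWithinAt (fun x ↦ exp (-θ * x)) (-θ * exp (-θ * x)) (Ioi 0) x := fun x _ ↦
    (((hasDerivAt_id' x).const_mul (-θ)).exp.congr_deriv (by ring)).hasDerivWithinAt
  have hinj : InjOn (fun x ↦ exp (-θ * x)) (Ioi 0) := fun a _ b _ hab ↦
    mul_left_cancel₀ (neg_ne_zero.2 hθ.ne') (exp_injective hab)
  rw [← image_exp_neg_mul_Ioi hθ,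
    integral_image_eq_integral_abs_deriv_smul measurableSet_Ioi hderiv hinj]
  refine setIntegral_congr_fun measurableSet_Ioi fun x _ ↦ ?_
  rw [abs_of_neg (by have := exp_pos (-θ * x); nlinarith), neg_mul_eq_neg_mul, neg_neg]

theorem integral_Ioo_rpow_mul_one_sub_rpow {s t : ℝ} (hs : 0 < s) (ht : 0 < t) :
    ∫ x in Ioo (0 : ℝ) 1, x ^ (s - 1) * (1 - x) ^ (t - 1)
      = Gamma s * Gamma t / Gamma (s + t) := by
  have hbeta : Complex.betaIntegral s t
      = ↑(∫ x in Ioo (0 : ℝ) 1, x ^ (s - 1) * (1 - x) ^ (t - 1)) := by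
    rw [Complex.betaIntegral, intervalIntegral.integral_of_le zero_le_one,
      integral_Ioc_eq_integral_Ioo, ← integral_complex_ofReal]
    refine setIntegral_congr_fun measurableSet_Ioo fun x hx ↦ ?_
    push_cast
    rw [Complex.ofReal_cpow hx.1.le, Complex.ofReal_cpow (sub_pos.2 hx.2).le]
    push_cast; rfl
  apply Complex.ofReal_injective
  rw [← hbeta, Complex.betaIntegral_eq_Gamma_mul_div _ _ (by simpa) (by simpa)]
  push_cast [← Complex.Gamma_ofReal]
  rfl

theorem integral_Ioi_rpow_const_mul_exponential_pdf_mul_cdf_pow {α θ c : ℝ} (hα : 0 < α)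
    (hθ : 0 < θ) (hc : 0 ≤ c) (i : ℕ) :
    ∫ x in Ioi 0, (c * (θ * exp (-θ * x)) * (1 - exp (-θ * x)) ^ i) ^ α
      = θ ^ (α - 1) * c ^ α * (Gamma α * Gamma (α * i + 1) / Gamma (α * (i + 1) + 1)) := by
  set g : ℝ → ℝ :=
    fun u ↦ θ ^ (α - 1) * c ^ α * (u ^ (α - 1) * (1 - u) ^ ((α * i + 1) - 1))
  have hpow : ∀ u ∈ Ioo (0 : ℝ) 1, (c * (θ * u) * (1 - u) ^ i) ^ α = (θ * u) * g u := by
    rintro u ⟨hu0, hu1⟩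
    have h1u : 0 ≤ 1 - u := by linarith
    simp only [g]
    rw [mul_rpow (by positivity) (by positivity), mul_rpow hc (by positivity),
      mul_rpow hθ.le hu0.le, ← rpow_natCast, ← rpow_mul h1u, add_sub_cancel_right,
      rpow_sub_one hθ.ne', rpow_sub_one hu0.ne']
    field_simp
  calc ∫ x in Ioi 0, (c * (θ * exp (-θ * x)) * (1 - exp (-θ * x)) ^ i) ^ α
      = ∫ x in Ioi 0, (θ * exp (-θ * x)) • g (exp (-θ * x)) := by
        refine setIntegral_congr_fun measurableSet_Ioi fun x hx ↦ hpow _ ?_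
        rw [← image_exp_neg_mul_Ioi hθ]
        exact mem_image_of_mem _ hx
    _ = ∫ u in Ioo 0 1, g u := integral_Ioi_comp_exp_neg_mul hθ g
    _ = _ := by
        rw [integral_const_mul, integral_Ioo_rpow_mul_one_sub_rpow hα (by positivity)]
        ring_nf

theorem tsallis_entropy_mrssu_exponential_general
    (α θ : ℝ) (n : ℕ) (hα : 0 < α) (hθ : 0 < θ) :
    (1 / (1 - α)) *
      ((∏ i ∈ Finset.range n,
        ∫ x in Set.Ioi (0:ℝ),
          (((i : ℝ) + 1) * (θ * Real.exp (-θ * x)) *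
            (1 - Real.exp (-θ * x)) ^ (i : ℕ)) ^ α) - 1)
    = (1 / (α - 1)) *
      (1 - θ ^ ((n : ℝ) * (α - 1)) * (Real.Gamma α) ^ n *
        ∏ i ∈ Finset.range n,
          (Real.Gamma (α * (i : ℝ) + 1) * ((i : ℝ) + 1) ^ α /
            Real.Gamma (α * ((i : ℝ) + 1) + 1))) := by
  have hfactor : ∀ i ∈ Finset.range n,
      ∫ x in Ioi 0, ((i + 1) * (θ * exp (-θ * x)) * (1 - exp (-θ * x)) ^ i) ^ α
        = θ ^ (α - 1) * Gamma α *
          (Gamma (α * i + 1) * ((i : ℝ) + 1) ^ α / Gamma (α * (i + 1) + 1)) := fun i _ ↦ by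
    rw [integral_Ioi_rpow_const_mul_exponential_pdf_mul_cdf_pow hα hθ (by positivity)]
    ring
  have hθpow : (θ ^ (α - 1)) ^ n = θ ^ ((n : ℝ) * (α - 1)) := by
    rw [← rpow_natCast, ← rpow_mul hθ.le, mul_comm]
  rw [Finset.prod_congr rfl hfactor, Finset.prod_mul_distrib, Finset.prod_const,
    Finset.card_range, mul_pow, hθpow, ← neg_sub α 1, one_div_neg_eq_neg_one_div]
  ring

/-- Tsallis entropy of the MRSSU sample of size `n` from an exponential(θ) population:
`S_α(Z_MRSSU) = (1/(α−1)) (1 − θ^{n(α−1)} Γ(α)^n ∏_{i=1}^n Γ(α(i−1)+1) i^α / Γ(αi+1))`. -/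
theorem tsallis_entropy_mrssu_exponential
    (α θ : ℝ) (n : ℕ) (hα : 0 < α) (hα1 : α ≠ 1) (hθ : 0 < θ) :
    (1 / (1 - α)) *
      ((∏ i ∈ Finset.range n,
        ∫ x in Set.Ioi (0:ℝ),
          (((i : ℝ) + 1) * (θ * Real.exp (-θ * x)) *
            (1 - Real.exp (-θ * x)) ^ (i : ℕ)) ^ α) - 1)
    = (1 / (α - 1)) *
      (1 - θ ^ ((n : ℝ) * (α - 1)) * (Real.Gamma α) ^ n *
        ∏ i ∈ Finset.range n,
          (Real.Gamma (α * (i : ℝ) + 1) * ((i : ℝ) + 1) ^ α /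
            Real.Gamma (α * ((i : ℝ) + 1) + 1))) :=
  tsallis_entropy_mrssu_exponential_general α θ n hα hθ
end

section
/- For any α>0, α≠1, the normalized Tsallis entropies of MRSSU and SRS samples of size n satisfy (1−α) S_α(X_MRSSU) + 1 ≤ (n!)^α [ (1−α) S_α(X_SRS) + 1 ]. -/
/-!
Since `0 ≤ F ≤ 1`, the integrand of the `i`-th MRSSU factor is dominated pointwise:
`(i f F^(i-1))^α ≤ i^α f^α`. Integrating gives `∫ (i f F^(i-1))^α ≤ i^α ∫ f^α`, and taking the
product over `i = 1, …, n` turns `∏ i^α` into `(n!)^α`.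
-/

open MeasureTheory Set Finset

lemma mul_one_div_mul_sub_one_add_one {c : ℝ} (hc : c ≠ 0) (X : ℝ) :
    c * (1 / c * (X - 1)) + 1 = X := by
  field_simp
  ring

lemma rpow_mul_mul_le_rpow_mul_rpow {a b c α : ℝ} (ha : 0 ≤ a) (hb : 0 ≤ b) (hc₀ : 0 ≤ c)
    (hc₁ : c ≤ 1) (hα : 0 ≤ α) : (a * b * c) ^ α ≤ a ^ α * b ^ α := by
  calc (a * b * c) ^ α ≤ (a * b) ^ α :=
        Real.rpow_le_rpow (by positivity) (mul_le_of_le_one_right (by positivity) hc₁) hα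
    _ = a ^ α * b ^ α := Real.mul_rpow ha hb

section Integrals

variable {X : Type*} [MeasurableSpace X] {μ : Measure X} {f F : X → ℝ} {α : ℝ}

lemma integral_rpow_mul_pow_le (hα : 0 ≤ α) (hf : ∀ x, 0 ≤ f x)
    (hF : ∀ x, 0 ≤ F x ∧ F x ≤ 1) (hfα : Integrable (fun x => f x ^ α) μ)
    {a : ℝ} (ha : 0 ≤ a) (k : ℕ) :
    ∫ x, (a * f x * F x ^ k) ^ α ∂μ ≤ a ^ α * ∫ x, f x ^ α ∂μ := by
  rw [← integral_const_mul]
  refine integral_mono_of_nonneg (ae_of_all _ fun x => ?_) (hfα.const_mul _)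
    (ae_of_all _ fun x => ?_)
  · have := (hF x).1
    have := hf x
    positivity
  · exact rpow_mul_mul_le_rpow_mul_rpow ha (hf x) (pow_nonneg (hF x).1 k)
      (pow_le_one₀ (hF x).1 (hF x).2) hα

lemma prod_integral_rpow_mul_pow_le (hα : 0 ≤ α) (hf : ∀ x, 0 ≤ f x)
    (hF : ∀ x, 0 ≤ F x ∧ F x ≤ 1) (hfα : Integrable (fun x => f x ^ α) μ) (n : ℕ) :
    ∏ i ∈ range n, ∫ x, (((i : ℝ) + 1) * f x * F x ^ i) ^ α ∂μ
      ≤ (n.factorial : ℝ) ^ α * (∫ x, f x ^ α ∂μ) ^ n := by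
  calc ∏ i ∈ range n, ∫ x, (((i : ℝ) + 1) * f x * F x ^ i) ^ α ∂μ
      ≤ ∏ i ∈ range n, (((i : ℝ) + 1) ^ α * ∫ x, f x ^ α ∂μ) := by
        refine prod_le_prod (fun i _ => integral_nonneg fun x => ?_)
          (fun i _ => integral_rpow_mul_pow_le hα hf hF hfα (by positivity) i)
        have := (hF x).1
        have := hf x
        positivity
    _ = (n.factorial : ℝ) ^ α * (∫ x, f x ^ α ∂μ) ^ n := by
        rw [prod_mul_distrib, prod_const, card_range,
          Real.finsetProd_rpow _ _ (fun i _ => by positivity) α,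
          ← prod_range_add_one_eq_factorial, Nat.cast_prod]
        simp only [Nat.cast_add, Nat.cast_one]

end Integrals

theorem tsallis_mrssu_le_srs_bound_general
    (f F : ℝ → ℝ) (α : ℝ) (n : ℕ) (hα : 0 < α) (hα1 : α ≠ 1)
    (hf : ∀ x, 0 ≤ f x)
    (hF01 : ∀ x, 0 ≤ F x ∧ F x ≤ 1)
    (hfi : Integrable (fun x => f x ^ α) (volume.restrict (Set.Ioi (0:ℝ))))
    (S_MRSSU S_SRS : ℝ)
    (hM : S_MRSSU = (1 / (1 - α)) *
      ((∏ i ∈ Finset.range n,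
        ∫ x in Set.Ioi (0:ℝ), (((i : ℝ) + 1) * f x * F x ^ (i : ℕ)) ^ α) - 1))
    (hS : S_SRS = (1 / (1 - α)) *
      ((∫ x in Set.Ioi (0:ℝ), f x ^ α) ^ n - 1)) :
    (1 - α) * S_MRSSU + 1 ≤ (n.factorial : ℝ) ^ α * ((1 - α) * S_SRS + 1) := by
  have hα1' : (1 : ℝ) - α ≠ 0 := sub_ne_zero.mpr hα1.symm
  rw [hM, hS, mul_one_div_mul_sub_one_add_one hα1', mul_one_div_mul_sub_one_add_one hα1']
  exact prod_integral_rpow_mul_pow_le hα.le hf hF01 hfi n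

/-- `(1−α) S_α(X_MRSSU) + 1 ≤ (n!)^α [ (1−α) S_α(X_SRS) + 1 ]` for `α>0, α≠1`. -/
theorem tsallis_mrssu_le_srs_bound
    (f F : ℝ → ℝ) (α : ℝ) (n : ℕ) (hα : 0 < α) (hα1 : α ≠ 1)
    (hf : ∀ x, 0 ≤ f x)
    (hF : ∀ x, F x = ∫ t in (0:ℝ)..x, f t)
    (hF01 : ∀ x, 0 ≤ F x ∧ F x ≤ 1)
    (hfi : Integrable (fun x => f x ^ α) (volume.restrict (Set.Ioi (0:ℝ))))
    (S_MRSSU S_SRS : ℝ)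
    (hM : S_MRSSU = (1 / (1 - α)) *
      ((∏ i ∈ Finset.range n,
        ∫ x in Set.Ioi (0:ℝ), (((i : ℝ) + 1) * f x * F x ^ (i : ℕ)) ^ α) - 1))
    (hS : S_SRS = (1 / (1 - α)) *
      ((∫ x in Set.Ioi (0:ℝ), f x ^ α) ^ n - 1)) :
    (1 - α) * S_MRSSU + 1 ≤ (n.factorial : ℝ) ^ α * ((1 - α) * S_SRS + 1) :=
  tsallis_mrssu_le_srs_bound_general f F α n hα hα1 hf hF01 hfi S_MRSSU S_SRS hM hS
end

section
/- If X is less than Y in the dispersive order (f(F⁻¹(u)) ≥ g(G⁻¹(u)) for all u ∈ (0,1)), then S_α(X_MRSSU) ≤ S_α(Y_MRSSU) for all α>0, α≠1. -/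
/-!
Write `d = f ∘ F⁻¹` and `e = g ∘ G⁻¹`, so that the dispersive order says `0 < e ≤ d` on `(0, 1)`.
Since `x ↦ x ^ (α - 1)` is antitone on `(0, ∞)` for `α ≤ 1` and monotone for `α ≥ 1`, each factor
`∫₀¹ (i+1)^α u^{αi} d(u)^{α-1} du` of the entropy is at most the corresponding factor for `e` when
`α ≤ 1` and at least it when `α ≥ 1`; the factors are nonnegative, so the same holds for the
products. The sign of `1 / (1 - α)` flips exactly at `α = 1`, which turns both cases into the same
inequality.
-/

open MeasureTheory Set Finset

noncomputable section

theorem intervalIntegral.integral_nonneg_of_forall_Ioo {f : ℝ → ℝ} {a b : ℝ} (hab : a ≤ b)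
    (hf : ∀ x ∈ Ioo a b, 0 ≤ f x) : 0 ≤ ∫ x in a..b, f x := by
  rw [intervalIntegral.integral_of_le hab, integral_Ioc_eq_integral_Ioo]
  exact setIntegral_nonneg measurableSet_Ioo hf

section WeightedRpow

variable {a b p : ℝ} {w φ ψ : ℝ → ℝ}

theorem integral_mul_rpow_nonneg (hab : a ≤ b) (hw : ∀ x ∈ Ioo a b, 0 ≤ w x)
    (hφ : ∀ x ∈ Ioo a b, 0 ≤ φ x) : 0 ≤ ∫ x in a..b, w x * φ x ^ p :=
  intervalIntegral.integral_nonneg_of_forall_Ioo hab fun x hx =>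
    mul_nonneg (hw x hx) (Real.rpow_nonneg (hφ x hx) p)

theorem integral_mul_rpow_le_of_nonpos (hab : a ≤ b) (hw : ∀ x ∈ Ioo a b, 0 ≤ w x)
    (hψ : ∀ x ∈ Ioo a b, 0 < ψ x) (hψφ : ∀ x ∈ Ioo a b, ψ x ≤ φ x) (hp : p ≤ 0)
    (hφi : IntervalIntegrable (fun x => w x * φ x ^ p) volume a b)
    (hψi : IntervalIntegrable (fun x => w x * ψ x ^ p) volume a b) :
    ∫ x in a..b, w x * φ x ^ p ≤ ∫ x in a..b, w x * ψ x ^ p :=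
  intervalIntegral.integral_mono_on_of_le_Ioo hab hφi hψi fun x hx =>
    mul_le_mul_of_nonneg_left (Real.rpow_le_rpow_of_nonpos (hψ x hx) (hψφ x hx) hp) (hw x hx)

theorem integral_mul_rpow_le_of_nonneg (hab : a ≤ b) (hw : ∀ x ∈ Ioo a b, 0 ≤ w x)
    (hψ : ∀ x ∈ Ioo a b, 0 ≤ ψ x) (hψφ : ∀ x ∈ Ioo a b, ψ x ≤ φ x) (hp : 0 ≤ p)
    (hψi : IntervalIntegrable (fun x => w x * ψ x ^ p) volume a b)
    (hφi : IntervalIntegrable (fun x => w x * φ x ^ p) volume a b) :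
    ∫ x in a..b, w x * ψ x ^ p ≤ ∫ x in a..b, w x * φ x ^ p :=
  intervalIntegral.integral_mono_on_of_le_Ioo hab hψi hφi fun x hx =>
    mul_le_mul_of_nonneg_left (Real.rpow_le_rpow (hψ x hx) (hψφ x hx) hp) (hw x hx)

end WeightedRpow

/-- The paper's index `i` is our `i + 1`. -/
def mrssuWeight (α : ℝ) (i : ℕ) (u : ℝ) : ℝ :=
  ((i : ℝ) + 1) ^ α * u ^ (α * (i : ℝ))

/-- `S_α(X_MRSSU)` in terms of the density-quantile function `d = f ∘ F⁻¹`. -/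
def tsallisMRSSU (d : ℝ → ℝ) (α : ℝ) (n : ℕ) : ℝ :=
  (1 / (1 - α)) * ((∏ i ∈ range n, ∫ u in (0:ℝ)..1, mrssuWeight α i u * d u ^ (α - 1)) - 1)

theorem mrssuWeight_nonneg (α : ℝ) (i : ℕ) (u : ℝ) (hu : u ∈ Ioo (0:ℝ) 1) :
    0 ≤ mrssuWeight α i u := by
  have := hu.1
  unfold mrssuWeight
  positivity

theorem tsallisMRSSU_le_of_le {d e : ℝ → ℝ} {α : ℝ} (n : ℕ)
    (he : ∀ u ∈ Ioo (0:ℝ) 1, 0 < e u) (hed : ∀ u ∈ Ioo (0:ℝ) 1, e u ≤ d u)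
    (hdi : ∀ i : ℕ, IntervalIntegrable (fun u => mrssuWeight α i u * d u ^ (α - 1)) volume 0 1)
    (hei : ∀ i : ℕ, IntervalIntegrable (fun u => mrssuWeight α i u * e u ^ (α - 1)) volume 0 1) :
    tsallisMRSSU d α n ≤ tsallisMRSSU e α n := by
  have hd : ∀ u ∈ Ioo (0:ℝ) 1, 0 < d u := fun u hu => (he u hu).trans_le (hed u hu)
  -- `α = 1` falls into the first case: there `1 / (1 - α) = 0`.
  rcases le_or_gt α 1 with hα | hα
  · refine mul_le_mul_of_nonneg_left (sub_le_sub_right (prod_le_prod (fun i _ => ?_)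
      (fun i _ => ?_)) 1) (one_div_nonneg.2 (sub_nonneg.2 hα))
    · exact integral_mul_rpow_nonneg zero_le_one (mrssuWeight_nonneg α i)
        fun u hu => (hd u hu).le
    · exact integral_mul_rpow_le_of_nonpos zero_le_one (mrssuWeight_nonneg α i) he hed
        (by linarith) (hdi i) (hei i)
  · refine mul_le_mul_of_nonpos_left (sub_le_sub_right (prod_le_prod (fun i _ => ?_)
      (fun i _ => ?_)) 1) (one_div_nonpos.2 (by linarith))
    · exact integral_mul_rpow_nonneg zero_le_one (mrssuWeight_nonneg α i)
        fun u hu => (he u hu).le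
    · exact integral_mul_rpow_le_of_nonneg zero_le_one (mrssuWeight_nonneg α i)
        (fun u hu => (he u hu).le) hed (by linarith) (hei i) (hdi i)

end

theorem tsallis_mrssu_dispersive_order_general
    (f g QX QY : ℝ → ℝ) (α : ℝ) (n : ℕ)
    (hgpos : ∀ u ∈ Set.Ioo (0:ℝ) 1, 0 < g (QY u))
    (hdisp : ∀ u ∈ Set.Ioo (0:ℝ) 1, g (QY u) ≤ f (QX u))
    (hfint : ∀ i : ℕ, IntervalIntegrable
      (fun u => ((i : ℝ) + 1) ^ α * u ^ (α * (i : ℝ)) * f (QX u) ^ (α - 1))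
      volume 0 1)
    (hgint : ∀ i : ℕ, IntervalIntegrable
      (fun u => ((i : ℝ) + 1) ^ α * u ^ (α * (i : ℝ)) * g (QY u) ^ (α - 1))
      volume 0 1) :
    (1 / (1 - α)) *
      ((∏ i ∈ Finset.range n,
        ∫ u in (0:ℝ)..1, ((i : ℝ) + 1) ^ α * u ^ (α * (i : ℝ)) *
          f (QX u) ^ (α - 1)) - 1)
    ≤ (1 / (1 - α)) *
      ((∏ i ∈ Finset.range n,
        ∫ u in (0:ℝ)..1, ((i : ℝ) + 1) ^ α * u ^ (α * (i : ℝ)) *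
          g (QY u) ^ (α - 1)) - 1) :=
  tsallisMRSSU_le_of_le n hgpos hdisp hfint hgint

/-- If `X ≤_disp Y`, i.e. `f(F⁻¹(u)) ≥ g(G⁻¹(u))` for all `u ∈ (0,1)`, then
`S_α(X_MRSSU) ≤ S_α(Y_MRSSU)` for all `α>0, α≠1`. -/
theorem tsallis_mrssu_dispersive_order
    (f g QX QY : ℝ → ℝ) (α : ℝ) (n : ℕ) (hα : 0 < α) (hα1 : α ≠ 1)
    (hfpos : ∀ u ∈ Set.Ioo (0:ℝ) 1, 0 < f (QX u))
    (hgpos : ∀ u ∈ Set.Ioo (0:ℝ) 1, 0 < g (QY u))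
    (hdisp : ∀ u ∈ Set.Ioo (0:ℝ) 1, g (QY u) ≤ f (QX u))
    (hfint : ∀ i : ℕ, IntervalIntegrable
      (fun u => ((i : ℝ) + 1) ^ α * u ^ (α * (i : ℝ)) * f (QX u) ^ (α - 1))
      volume 0 1)
    (hgint : ∀ i : ℕ, IntervalIntegrable
      (fun u => ((i : ℝ) + 1) ^ α * u ^ (α * (i : ℝ)) * g (QY u) ^ (α - 1))
      volume 0 1) :
    (1 / (1 - α)) *
      ((∏ i ∈ Finset.range n,
        ∫ u in (0:ℝ)..1, ((i : ℝ) + 1) ^ α * u ^ (α * (i : ℝ)) *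
          f (QX u) ^ (α - 1)) - 1)
    ≤ (1 / (1 - α)) *
      ((∏ i ∈ Finset.range n,
        ∫ u in (0:ℝ)..1, ((i : ℝ) + 1) ^ α * u ^ (α * (i : ℝ)) *
          g (QY u) ^ (α - 1)) - 1) :=
  tsallis_mrssu_dispersive_order_general f g QX QY α n hgpos hdisp hfint hgint
end

section
/- For X uniform on (0,b), with n=2: S_α(X_SRS) = (1/(α−1))[1 − b^{2−2α}], S_α(X_RSS) = (1/(α−1))[1 − 4^α b^{2−2α}/(α+1)²], and S_α(X_MRSSU) = (1/(α−1))[1 − 2^α b^{2−2α}/(α+1)]. -/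
/-!
The densities `2 f (1 - F)` and `2 f F` of the two order statistics of a uniform sample of
size 2 are mirror images of each other under `x ↦ b - x`, so both have the same integral
`∫₀ᵇ (2x/b²)^α dx = 2^α b^(1-α) / (α + 1)`, while `∫₀ᵇ f^α = b^(1-α)`. The three formulas are
then algebra in `2^α` and `b^(1-α)`.
-/

open MeasureTheory Set

lemma one_div_one_sub_mul_sub_one (α X : ℝ) :
    1 / (1 - α) * (X - 1) = 1 / (α - 1) * (1 - X) := by
  rw [← neg_sub α 1, ← neg_sub 1 X, one_div_neg_eq_neg_one_div, neg_mul_neg]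

lemma integral_one_div_rpow {b : ℝ} (hb : 0 < b) (α : ℝ) :
    ∫ _ in (0:ℝ)..b, (1 / b) ^ α = b ^ (1 - α) := by
  rw [intervalIntegral.integral_const, sub_zero, smul_eq_mul, one_div, Real.inv_rpow hb.le,
    ← Real.rpow_neg hb.le, sub_eq_add_neg, Real.rpow_add hb, Real.rpow_one]

lemma integral_const_mul_rpow {b c α : ℝ} (hb : 0 ≤ b) (hc : 0 ≤ c) (hα : -1 < α) :
    ∫ x in (0:ℝ)..b, (c * x) ^ α = c ^ α * (b ^ (α + 1) / (α + 1)) := by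
  have hmul : EqOn (fun x => (c * x) ^ α) (fun x => c ^ α * x ^ α) (uIcc 0 b) := by
    intro x hx
    rw [uIcc_of_le hb] at hx
    exact Real.mul_rpow hc hx.1
  rw [intervalIntegral.integral_congr hmul, intervalIntegral.integral_const_mul,
    integral_rpow (Or.inl hα), Real.zero_rpow (by linarith), sub_zero]

lemma integral_max_density_rpow {b α : ℝ} (hb : 0 < b) (hα : -1 < α) :
    ∫ x in (0:ℝ)..b, (2 * (1 / b) * (x / b)) ^ α = 2 ^ α * b ^ (1 - α) / (α + 1) := by
  have hdensity : (fun x => (2 * (1 / b) * (x / b)) ^ α) = fun x => (2 / b ^ 2 * x) ^ α := by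
    ext x; ring_nf
  have hpow : (b ^ 2) ^ α * b ^ (1 - α) = b ^ (α + 1) := by
    rw [← Real.rpow_natCast, ← Real.rpow_mul hb.le, ← Real.rpow_add hb]; ring_nf
  rw [hdensity, integral_const_mul_rpow hb.le (by positivity) hα,
    Real.div_rpow zero_le_two (by positivity), ← hpow]
  field_simp

lemma integral_min_density_rpow {b α : ℝ} (hb : 0 < b) (hα : -1 < α) :
    ∫ x in (0:ℝ)..b, (2 * (1 / b) * (1 - x / b)) ^ α = 2 ^ α * b ^ (1 - α) / (α + 1) := by
  have hreflect : ∀ x, 1 - x / b = (b - x) / b := fun x => by field_simp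
  simp_rw [hreflect]
  rw [intervalIntegral.integral_comp_sub_left (fun y => (2 * (1 / b) * (y / b)) ^ α) b,
    sub_self, sub_zero, integral_max_density_rpow hb hα]

theorem tsallis_uniform_n2_general
    (b α : ℝ) (hb : 0 < b) (hα : 0 < α) :
    ((1 / (1 - α)) * ((∫ x in (0:ℝ)..b, (1 / b) ^ α) ^ 2 - 1)
        = (1 / (α - 1)) * (1 - b ^ (2 - 2 * α))) ∧
    ((1 / (1 - α)) *
        ((∫ x in (0:ℝ)..b, (2 * (1 / b) * (1 - x / b)) ^ α) *
          (∫ x in (0:ℝ)..b, (2 * (1 / b) * (x / b)) ^ α) - 1)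
        = (1 / (α - 1)) * (1 - 4 ^ α * b ^ (2 - 2 * α) / (α + 1) ^ 2)) ∧
    ((1 / (1 - α)) *
        ((∫ x in (0:ℝ)..b, (1 / b) ^ α) *
          (∫ x in (0:ℝ)..b, (2 * (1 / b) * (x / b)) ^ α) - 1)
        = (1 / (α - 1)) * (1 - 2 ^ α * b ^ (2 - 2 * α) / (α + 1))) := by
  have hα' : -1 < α := by linarith
  have hb2 : b ^ (2 - 2 * α) = b ^ (1 - α) * b ^ (1 - α) := by
    rw [← Real.rpow_add hb]; ring_nf
  have h4 : (4:ℝ) ^ α = 2 ^ α * 2 ^ α := by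
    rw [← Real.mul_rpow zero_le_two zero_le_two]; norm_num
  simp only [one_div_one_sub_mul_sub_one, integral_one_div_rpow hb,
    integral_max_density_rpow hb hα', integral_min_density_rpow hb hα', hb2, h4]
  have hα1 : α + 1 ≠ 0 := by positivity
  refine ⟨by ring, by field_simp, by ring⟩

/-- Tsallis entropies of SRS, RSS and MRSSU samples of size 2 from a
uniform(0,b) population. -/
theorem tsallis_uniform_n2
    (b α : ℝ) (hb : 0 < b) (hα : 0 < α) (hα1 : α ≠ 1) :
    ((1 / (1 - α)) * ((∫ x in (0:ℝ)..b, (1 / b) ^ α) ^ 2 - 1)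
        = (1 / (α - 1)) * (1 - b ^ (2 - 2 * α))) ∧
    ((1 / (1 - α)) *
        ((∫ x in (0:ℝ)..b, (2 * (1 / b) * (1 - x / b)) ^ α) *
          (∫ x in (0:ℝ)..b, (2 * (1 / b) * (x / b)) ^ α) - 1)
        = (1 / (α - 1)) * (1 - 4 ^ α * b ^ (2 - 2 * α) / (α + 1) ^ 2)) ∧
    ((1 / (1 - α)) *
        ((∫ x in (0:ℝ)..b, (1 / b) ^ α) *
          (∫ x in (0:ℝ)..b, (2 * (1 / b) * (x / b)) ^ α) - 1)
        = (1 / (α - 1)) * (1 - 2 ^ α * b ^ (2 - 2 * α) / (α + 1))) :=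
  tsallis_uniform_n2_general b α hb hα
end

section
/- For X uniform on (0,b) and n=2, S_α(X_RSS) ≤ S_α(X_MRSSU) ≤ S_α(X_SRS) for all α>0, α≠1. -/
/-!
All three entropies are `(1 - α)⁻¹ (I - 1)` with `I` a product of two of the integrals
`∫ (1/b)^α = b^{1-α}` and `∫ (2x/b²)^α = ∫ (2(1 - x/b)/b)^α = T b^{1-α}`, `T = 2^α/(α+1)`.
Consecutive differences are `(1 - α)⁻¹ (T - 1)` times a nonnegative factor, and by Bernoulli's
inequality `2^α - (1 + α)` has the sign of `α - 1`.
-/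

open MeasureTheory

theorem two_rpow_div_add_one_sub_one_div_one_sub_nonpos {α : ℝ} (hα : 0 ≤ α) :
    (2 ^ α / (α + 1) - 1) / (1 - α) ≤ 0 := by
  have h2 : (2 : ℝ) = 1 + 1 := by norm_num
  rcases le_total α 1 with hle | hge
  · have hbern : (2 : ℝ) ^ α ≤ 1 + α := by
      simpa [← h2] using rpow_one_add_le_one_add_mul_self (s := 1) (by norm_num) hα hle
    refine div_nonpos_of_nonpos_of_nonneg ?_ (by linarith)
    rw [sub_nonpos, div_le_one (by linarith)]
    linarith
  · have hbern : 1 + α ≤ (2 : ℝ) ^ α := by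
      simpa [← h2] using one_add_mul_self_le_rpow_one_add (s := 1) (by norm_num) hge
    refine div_nonpos_of_nonneg_of_nonpos ?_ (by linarith)
    rw [sub_nonneg, le_div_iff₀ (by linarith)]
    linarith

theorem integral_mul_div_rpow {b c α : ℝ} (hb : 0 < b) (hc : 0 ≤ c) (hα : -1 < α) :
    ∫ x in (0 : ℝ)..b, (c * (x / b)) ^ α = b * c ^ α / (α + 1) := by
  have hα1 : α + 1 ≠ 0 := by linarith
  rw [intervalIntegral.integral_comp_div (fun t => (c * t) ^ α) hb.ne', zero_div, div_self hb.ne']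
  have hcongr : Set.EqOn (fun t : ℝ => (c * t) ^ α) (fun t => c ^ α * t ^ α) (Set.uIcc 0 1) := by
    intro t ht
    rw [Set.uIcc_of_le zero_le_one] at ht
    exact Real.mul_rpow hc ht.1
  rw [intervalIntegral.integral_congr hcongr, intervalIntegral.integral_const_mul,
    integral_rpow (Or.inl hα), Real.one_rpow, Real.zero_rpow hα1, smul_eq_mul]
  ring

theorem integral_comp_one_sub_div {b : ℝ} (hb : b ≠ 0) (f : ℝ → ℝ) :
    ∫ x in (0 : ℝ)..b, f (1 - x / b) = ∫ x in (0 : ℝ)..b, f (x / b) := by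
  have hreflect : ∀ x, 1 - x / b = (b - x) / b := fun x => by field_simp
  simp only [hreflect]
  rw [intervalIntegral.integral_comp_sub_left (fun x => f (x / b)), sub_self, sub_zero]

theorem tsallis_uniform_n2_ordering_general
    (b α : ℝ) (hb : 0 < b) (hα : 0 < α)
    (S_SRS S_RSS S_MRSSU : ℝ)
    (hS : S_SRS = (1 / (1 - α)) * ((∫ x in (0:ℝ)..b, (1 / b) ^ α) ^ 2 - 1))
    (hR : S_RSS = (1 / (1 - α)) *
      ((∫ x in (0:ℝ)..b, (2 * (1 / b) * (1 - x / b)) ^ α) *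
        (∫ x in (0:ℝ)..b, (2 * (1 / b) * (x / b)) ^ α) - 1))
    (hM : S_MRSSU = (1 / (1 - α)) *
      ((∫ x in (0:ℝ)..b, (1 / b) ^ α) *
        (∫ x in (0:ℝ)..b, (2 * (1 / b) * (x / b)) ^ α) - 1)) :
    S_RSS ≤ S_MRSSU ∧ S_MRSSU ≤ S_SRS := by
  set K := b * (1 / b) ^ α
  set T := (2 : ℝ) ^ α / (α + 1)
  have hconst : ∫ x in (0:ℝ)..b, (1 / b) ^ α = K := by simp [K]
  have hlin : ∫ x in (0:ℝ)..b, (2 * (1 / b) * (x / b)) ^ α = T * K := by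
    rw [integral_mul_div_rpow hb (by positivity) (by linarith),
      Real.mul_rpow zero_le_two (by positivity)]
    ring
  rw [integral_comp_one_sub_div hb.ne' (fun y => (2 * (1 / b) * y) ^ α), hlin] at hR
  rw [hconst, hlin] at hM
  rw [hconst] at hS
  have hsign : 1 / (1 - α) * (T - 1) ≤ 0 :=
    (one_div_mul_eq_div _ _).trans_le (two_rpow_div_add_one_sub_one_div_one_sub_nonpos hα.le)
  have hT : 0 ≤ T := by positivity
  subst hS hR hM
  constructor
  · linarith [mul_nonpos_of_nonpos_of_nonneg hsign (mul_nonneg hT (sq_nonneg K))]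
  · linarith [mul_nonpos_of_nonpos_of_nonneg hsign (sq_nonneg K)]

/-- For `X` uniform on `(0,b)` and `n = 2`:
`S_α(X_RSS) ≤ S_α(X_MRSSU) ≤ S_α(X_SRS)` for all `α>0, α≠1`. -/
theorem tsallis_uniform_n2_ordering
    (b α : ℝ) (hb : 0 < b) (hα : 0 < α) (hα1 : α ≠ 1)
    (S_SRS S_RSS S_MRSSU : ℝ)
    (hS : S_SRS = (1 / (1 - α)) * ((∫ x in (0:ℝ)..b, (1 / b) ^ α) ^ 2 - 1))
    (hR : S_RSS = (1 / (1 - α)) *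
      ((∫ x in (0:ℝ)..b, (2 * (1 / b) * (1 - x / b)) ^ α) *
        (∫ x in (0:ℝ)..b, (2 * (1 / b) * (x / b)) ^ α) - 1))
    (hM : S_MRSSU = (1 / (1 - α)) *
      ((∫ x in (0:ℝ)..b, (1 / b) ^ α) *
        (∫ x in (0:ℝ)..b, (2 * (1 / b) * (x / b)) ^ α) - 1)) :
    S_RSS ≤ S_MRSSU ∧ S_MRSSU ≤ S_SRS :=
  tsallis_uniform_n2_ordering_general b α hb hα S_SRS S_RSS S_MRSSU hS hR hM
end

section
/- For the cumulative Tsallis entropy, ℂ𝔼_α(X_MRSSU) ≤ ℂ𝔼_α(X_SRS) for 0<α<1, and ℂ𝔼_α(X_MRSSU) ≥ ℂ𝔼_α(X_SRS) for α>1. -/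
open MeasureTheory Set Finset

/-! Since `0 ≤ F ≤ 1`, raising `F` to a larger exponent makes it smaller, so each factor
`∫ F ^ (i α)` of the ranked-set product is at most the simple-random-sample factor `∫ F ^ α`;
hence the product is at most `(∫ F ^ α) ^ n`. The prefactor `1 / (1 - α)` is positive for
`α < 1` and negative for `α > 1`, which fixes the direction of the inequality. -/

theorem prod_integral_le_integral_pow {β ι : Type*} [MeasurableSpace β] {μ : Measure β}
    (s : Finset ι) {f : ι → β → ℝ} {g : β → ℝ} (hf_nonneg : ∀ i ∈ s, 0 ≤ f i)
    (hf : ∀ i ∈ s, Integrable (f i) μ) (hg : Integrable g μ) (hfg : ∀ i ∈ s, f i ≤ g) :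
    ∏ i ∈ s, ∫ x, f i x ∂μ ≤ (∫ x, g x ∂μ) ^ #s := by
  rw [← prod_const]
  exact prod_le_prod (fun i hi => integral_nonneg (hf_nonneg i hi))
    fun i hi => integral_mono (hf i hi) hg (hfg i hi)

theorem one_div_one_sub_mul_sub_one_le_of_le {α a b : ℝ} (hab : a ≤ b) :
    (α < 1 → 1 / (1 - α) * (a - 1) ≤ 1 / (1 - α) * (b - 1)) ∧
      (1 < α → 1 / (1 - α) * (b - 1) ≤ 1 / (1 - α) * (a - 1)) := by
  have hab' : a - 1 ≤ b - 1 := sub_le_sub_right hab 1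
  refine ⟨fun hα => ?_, fun hα => ?_⟩
  · exact mul_le_mul_of_nonneg_left hab' (one_div_nonneg.mpr (sub_nonneg.mpr hα.le))
  · exact mul_le_mul_of_nonpos_left hab' (one_div_nonpos.mpr (sub_nonpos.mpr hα.le))

theorem cte_mrssu_vs_srs_general
    (F : ℝ → ℝ) (α : ℝ) (n : ℕ) (hα : 0 < α)
    (hF01 : ∀ x, 0 ≤ F x ∧ F x ≤ 1)
    (hint : ∀ i : ℕ, 1 ≤ i → Integrable (fun x => F x ^ ((i : ℝ) * α))
      (volume.restrict (Set.Ioi (0:ℝ))))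
    (CE_SRS CE_MRSSU : ℝ)
    (hS : CE_SRS = (1 / (1 - α)) *
      ((∫ x in Set.Ioi (0:ℝ), F x ^ α) ^ n - 1))
    (hM : CE_MRSSU = (1 / (1 - α)) *
      ((∏ i ∈ Finset.range n,
        ∫ x in Set.Ioi (0:ℝ), F x ^ (((i : ℝ) + 1) * α)) - 1)) :
    (α < 1 → CE_MRSSU ≤ CE_SRS) ∧ (1 < α → CE_SRS ≤ CE_MRSSU) := by
  have hint_succ (i : ℕ) : Integrable (fun x => F x ^ (((i : ℝ) + 1) * α))
      (volume.restrict (Ioi 0)) := by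
    exact_mod_cast hint (i + 1) (Nat.le_add_left 1 i)
  have hpow_le (i : ℕ) : (fun x => F x ^ (((i : ℝ) + 1) * α)) ≤ fun x => F x ^ α :=
    fun x => Real.rpow_le_rpow_of_exponent_ge' (hF01 x).1 (hF01 x).2 hα.le
      (le_mul_of_one_le_left hα.le (by linarith [i.cast_nonneg (α := ℝ)]))
  have hprod_le := prod_integral_le_integral_pow (range n)
    (fun i _ x => Real.rpow_nonneg (hF01 x).1 _) (fun i _ => hint_succ i)
    (by simpa using hint 1 le_rfl) (fun i _ => hpow_le i)
  rw [card_range] at hprod_le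
  subst hS hM
  exact one_div_one_sub_mul_sub_one_le_of_le hprod_le

/-- Cumulative Tsallis entropy comparison:
`ℂ𝔼_α(X_MRSSU) ≤ ℂ𝔼_α(X_SRS)` for `0<α<1` and the reverse for `α>1`. -/
theorem cte_mrssu_vs_srs
    (F : ℝ → ℝ) (α : ℝ) (n : ℕ) (hα : 0 < α) (hα1 : α ≠ 1)
    (hF01 : ∀ x, 0 ≤ F x ∧ F x ≤ 1) (hFmono : Monotone F)
    (hint : ∀ i : ℕ, 1 ≤ i → Integrable (fun x => F x ^ ((i : ℝ) * α))
      (volume.restrict (Set.Ioi (0:ℝ))))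
    (CE_SRS CE_MRSSU : ℝ)
    (hS : CE_SRS = (1 / (1 - α)) *
      ((∫ x in Set.Ioi (0:ℝ), F x ^ α) ^ n - 1))
    (hM : CE_MRSSU = (1 / (1 - α)) *
      ((∏ i ∈ Finset.range n,
        ∫ x in Set.Ioi (0:ℝ), F x ^ (((i : ℝ) + 1) * α)) - 1)) :
    (α < 1 → CE_MRSSU ≤ CE_SRS) ∧ (1 < α → CE_SRS ≤ CE_MRSSU) :=
  cte_mrssu_vs_srs_general F α n hα hF01 hint CE_SRS CE_MRSSU hS hM
end

section
/- If X ≤_st Y (i.e. F(x) ≥ G(x) for all x ≥ 0), then ℂ𝔼_α(X_MRSSU) ≥ ℂ𝔼_α(Y_MRSSU) for 0<α<1, and ℂ𝔼_α(X_MRSSU) ≤ ℂ𝔼_α(Y_MRSSU) for α>1. -/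
open MeasureTheory Set Finset

theorem setIntegral_rpow_le_of_le {X : Type*} [MeasurableSpace X] {μ : Measure X} {s : Set X}
    (hs : MeasurableSet s) {f g : X → ℝ} {p : ℝ}
    (hp : 0 ≤ p) (hg : ∀ x ∈ s, 0 ≤ g x) (hgf : ∀ x ∈ s, g x ≤ f x)
    (hfint : IntegrableOn (fun x => f x ^ p) s μ) :
    ∫ x in s, g x ^ p ∂μ ≤ ∫ x in s, f x ^ p ∂μ := by
  refine integral_mono_of_nonneg ?_ hfint ?_
  · filter_upwards [ae_restrict_mem hs] with x hx
    exact Real.rpow_nonneg (hg x hx) p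
  · filter_upwards [ae_restrict_mem hs] with x hx
    exact Real.rpow_le_rpow (hg x hx) (hgf x hx) hp

theorem cte_mrssu_stochastic_order_general
    (F G : ℝ → ℝ) (α : ℝ) (n : ℕ) (hα : 0 < α)
    (hG01 : ∀ x, 0 ≤ G x ∧ G x ≤ 1)
    (hst : ∀ x, 0 ≤ x → G x ≤ F x)
    (hFint : ∀ i : ℕ, Integrable (fun x => F x ^ (((i : ℝ) + 1) * α))
      (volume.restrict (Set.Ioi (0:ℝ))))
    (CE_X CE_Y : ℝ)
    (hX : CE_X = (1 / (1 - α)) *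
      ((∏ i ∈ Finset.range n,
        ∫ x in Set.Ioi (0:ℝ), F x ^ (((i : ℝ) + 1) * α)) - 1))
    (hY : CE_Y = (1 / (1 - α)) *
      ((∏ i ∈ Finset.range n,
        ∫ x in Set.Ioi (0:ℝ), G x ^ (((i : ℝ) + 1) * α)) - 1)) :
    (α < 1 → CE_Y ≤ CE_X) ∧ (1 < α → CE_X ≤ CE_Y) := by
  have hprod : (∏ i ∈ range n, ∫ x in Ioi (0:ℝ), G x ^ (((i : ℝ) + 1) * α)) ≤
      ∏ i ∈ range n, ∫ x in Ioi (0:ℝ), F x ^ (((i : ℝ) + 1) * α) :=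
    prod_le_prod (fun i _ => integral_nonneg fun x => Real.rpow_nonneg (hG01 x).1 _)
      fun i _ => setIntegral_rpow_le_of_le measurableSet_Ioi (by positivity)
        (fun x _ => (hG01 x).1) (fun x hx => hst x (le_of_lt hx)) (hFint i)
  subst hX hY
  constructor
  · intro hα1
    exact mul_le_mul_of_nonneg_left (by linarith) (one_div_nonneg.mpr (by linarith))
  · intro hα1
    exact mul_le_mul_of_nonpos_left (by linarith) (one_div_nonpos.mpr (by linarith))

/-- If `X ≤_st Y` (i.e. `F(x) ≥ G(x)` for all `x ≥ 0`), then
`ℂ𝔼_α(X_MRSSU) ≥ ℂ𝔼_α(Y_MRSSU)` for `0<α<1`, and `≤` for `α>1`. -/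
theorem cte_mrssu_stochastic_order
    (F G : ℝ → ℝ) (α : ℝ) (n : ℕ) (hα : 0 < α) (hα1 : α ≠ 1)
    (hF01 : ∀ x, 0 ≤ F x ∧ F x ≤ 1) (hG01 : ∀ x, 0 ≤ G x ∧ G x ≤ 1)
    (hst : ∀ x, 0 ≤ x → G x ≤ F x)
    (hFint : ∀ i : ℕ, Integrable (fun x => F x ^ (((i : ℝ) + 1) * α))
      (volume.restrict (Set.Ioi (0:ℝ))))
    (hGint : ∀ i : ℕ, Integrable (fun x => G x ^ (((i : ℝ) + 1) * α))
      (volume.restrict (Set.Ioi (0:ℝ))))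
    (CE_X CE_Y : ℝ)
    (hX : CE_X = (1 / (1 - α)) *
      ((∏ i ∈ Finset.range n,
        ∫ x in Set.Ioi (0:ℝ), F x ^ (((i : ℝ) + 1) * α)) - 1))
    (hY : CE_Y = (1 / (1 - α)) *
      ((∏ i ∈ Finset.range n,
        ∫ x in Set.Ioi (0:ℝ), G x ^ (((i : ℝ) + 1) * α)) - 1)) :
    (α < 1 → CE_Y ≤ CE_X) ∧ (1 < α → CE_X ≤ CE_Y) :=
  cte_mrssu_stochastic_order_general F G α n hα hG01 hst hFint CE_X CE_Y hX hY
end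

section
/- Under the affine transformation Y_MRSSU = a X_MRSSU + b with a>0, b≥0 (each component Y_i = aX_i + b), the cumulative Tsallis entropy transforms as ℂ𝔼_α(Y_MRSSU) = aⁿ ℂ𝔼_α(X_MRSSU) + (aⁿ−1)/(1−α). -/
open MeasureTheory Set Finset

/-- Since `b ≥ 0`, both integrands vanish off `Ioi 0`, so both integrals may be taken over all
of `ℝ`, where the affine substitution is exact. -/
theorem setIntegral_Ioi_comp_sub_div {E : Type*} [NormedAddCommGroup E] [NormedSpace ℝ E]
    (g : ℝ → E) {a b : ℝ} (ha : 0 < a) (hb : 0 ≤ b) (hg : ∀ x ≤ 0, g x = 0) :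
    ∫ y in Ioi 0, g ((y - b) / a) = a • ∫ x in Ioi 0, g x := by
  have hshift : ∀ y ∉ Ioi (0 : ℝ), g ((y - b) / a) = 0 := fun y hy =>
    hg _ (div_nonpos_of_nonpos_of_nonneg (by rw [Set.mem_Ioi, not_lt] at hy; linarith) ha.le)
  have hg' : ∀ x ∉ Ioi (0 : ℝ), g x = 0 := fun x hx => hg x (not_lt.mp hx)
  rw [setIntegral_eq_integral_of_forall_compl_eq_zero hshift,
    setIntegral_eq_integral_of_forall_compl_eq_zero hg',
    integral_sub_right_eq_self (fun u => g (u / a)) b,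
    Measure.integral_comp_div g a, abs_of_pos ha]

theorem cte_mrssu_affine_general
    (F G : ℝ → ℝ) (a b α : ℝ) (n : ℕ) (ha : 0 < a) (hb : 0 ≤ b)
    (hα : 0 < α) (hα1 : α ≠ 1)
    (hF0 : ∀ x, x ≤ 0 → F x = 0)
    (hG : ∀ y, G y = F ((y - b) / a))
    (CE_X CE_Y : ℝ)
    (hX : CE_X = (1 / (1 - α)) *
      ((∏ i ∈ Finset.range n,
        ∫ x in Set.Ioi (0:ℝ), F x ^ (((i : ℝ) + 1) * α)) - 1))
    (hY : CE_Y = (1 / (1 - α)) *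
      ((∏ i ∈ Finset.range n,
        ∫ y in Set.Ioi (0:ℝ), G y ^ (((i : ℝ) + 1) * α)) - 1)) :
    CE_Y = a ^ n * CE_X + (a ^ n - 1) / (1 - α) := by
  have hfactor : ∀ i ∈ range n, ∫ y in Ioi (0:ℝ), G y ^ (((i : ℝ) + 1) * α)
      = a * ∫ x in Ioi (0:ℝ), F x ^ (((i : ℝ) + 1) * α) := fun i _ => by
    simp only [hG]
    exact setIntegral_Ioi_comp_sub_div (fun x => F x ^ (((i : ℝ) + 1) * α)) ha hb
      fun x hx => by rw [hF0 x hx, Real.zero_rpow (by positivity)]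
  have h1α : 1 - α ≠ 0 := sub_ne_zero.mpr hα1.symm
  rw [hY, hX, prod_congr rfl hfactor, prod_mul_distrib, prod_const, card_range]
  field_simp
  ring

/-- Affine transformation of the cumulative Tsallis entropy of MRSSU data:
if `Y = aX + b` with `a>0, b≥0`, then
`ℂ𝔼_α(Y_MRSSU) = aⁿ ℂ𝔼_α(X_MRSSU) + (aⁿ−1)/(1−α)`. -/
theorem cte_mrssu_affine
    (F G : ℝ → ℝ) (a b α : ℝ) (n : ℕ) (ha : 0 < a) (hb : 0 ≤ b)
    (hα : 0 < α) (hα1 : α ≠ 1)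
    (hF01 : ∀ x, 0 ≤ F x ∧ F x ≤ 1) (hFmono : Monotone F)
    (hF0 : ∀ x, x ≤ 0 → F x = 0)
    (hG : ∀ y, G y = F ((y - b) / a))
    (hint : ∀ i : ℕ, Integrable (fun x => F x ^ (((i : ℝ) + 1) * α))
      (volume.restrict (Set.Ioi (0:ℝ))))
    (CE_X CE_Y : ℝ)
    (hX : CE_X = (1 / (1 - α)) *
      ((∏ i ∈ Finset.range n,
        ∫ x in Set.Ioi (0:ℝ), F x ^ (((i : ℝ) + 1) * α)) - 1))
    (hY : CE_Y = (1 / (1 - α)) *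
      ((∏ i ∈ Finset.range n,
        ∫ y in Set.Ioi (0:ℝ), G y ^ (((i : ℝ) + 1) * α)) - 1)) :
    CE_Y = a ^ n * CE_X + (a ^ n - 1) / (1 - α) :=
  cte_mrssu_affine_general F G a b α n ha hb hα hα1 hF0 hG CE_X CE_Y hX hY
end

section
/- For X uniform on (0,1) with n=2, the difference ℂ𝔼_α(X_MRSSU) − ℂ𝔼_α(X_SRS) = α / [(α²−1)(2α+1)(α+1)], which is negative for 0<α<1 and positive for α>1. -/
/-!
Both integrals are instances of `∫₀¹ x ^ r = 1 / (r + 1)`, which yields the closed forms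
`(α² + 2α) / ((α² - 1)(α + 1))` and `(2α² + 3α) / ((α² - 1)(2α + 1))`. Their difference is
`α / ((α² - 1)(2α + 1)(α + 1))` because `(2α² + 3α)(α + 1) - (α² + 2α)(2α + 1) = α`, and for
`α > 0` its sign is that of `α² - 1`.
-/

open MeasureTheory Set

theorem integral_rpow_zero_one {r : ℝ} (hr : -1 < r) :
    ∫ x in (0:ℝ)..1, x ^ r = 1 / (r + 1) := by
  rw [integral_rpow (Or.inl hr), Real.one_rpow, Real.zero_rpow (by linarith), sub_zero]

theorem sq_sub_one_ne_zero {α : ℝ} (hα : -1 < α) (hα1 : α ≠ 1) : α ^ 2 - 1 ≠ 0 := by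
  rw [show α ^ 2 - 1 = (α - 1) * (α + 1) by ring]
  exact mul_ne_zero (sub_ne_zero.mpr hα1) (by linarith)

theorem cte_srs_uniform {α : ℝ} (hα : -1 < α) (hα1 : α ≠ 1) :
    1 / (1 - α) * ((∫ x in (0:ℝ)..1, x ^ α) ^ 2 - 1) =
      (α ^ 2 + 2 * α) / ((α ^ 2 - 1) * (α + 1)) := by
  have h1 : 1 - α ≠ 0 := sub_ne_zero.mpr hα1.symm
  have h2 := sq_sub_one_ne_zero hα hα1
  have h3 : α + 1 ≠ 0 := by linarith
  rw [integral_rpow_zero_one hα]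
  field_simp
  ring

theorem cte_mrssu_uniform {α : ℝ} (hα : -1 / 2 < α) (hα1 : α ≠ 1) :
    1 / (1 - α) * ((∫ x in (0:ℝ)..1, x ^ α) * (∫ x in (0:ℝ)..1, x ^ (2 * α)) - 1) =
      (2 * α ^ 2 + 3 * α) / ((α ^ 2 - 1) * (2 * α + 1)) := by
  have h1 : 1 - α ≠ 0 := sub_ne_zero.mpr hα1.symm
  have h2 := sq_sub_one_ne_zero (by linarith) hα1
  have h3 : α + 1 ≠ 0 := by linarith
  -- `field_simp` looks for this hypothesis only after normalising `2 * α + 1` to `α * 2 + 1`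
  have h4 : α * 2 + 1 ≠ 0 := by linarith
  rw [integral_rpow_zero_one (by linarith), integral_rpow_zero_one (by linarith)]
  field_simp
  ring

theorem cte_closed_forms_sub {α : ℝ} (d : ℝ) (h1 : α + 1 ≠ 0) (h2 : 2 * α + 1 ≠ 0) :
    (2 * α ^ 2 + 3 * α) / (d * (2 * α + 1)) - (α ^ 2 + 2 * α) / (d * (α + 1)) =
      α / (d * (2 * α + 1) * (α + 1)) := by
  simp only [div_mul_eq_div_div_swap]
  field_simp
  ring

/-- For `X` uniform on `(0,1)` with `n = 2`, the difference
`ℂ𝔼_α(X_MRSSU) − ℂ𝔼_α(X_SRS) = α/[(α²−1)(2α+1)(α+1)]`, which is negative for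
`0<α<1` and positive for `α>1`. -/
theorem cte_uniform_n2_difference
    (α : ℝ) (hα : 0 < α) (hα1 : α ≠ 1)
    (CE_SRS CE_MRSSU : ℝ)
    (hS : CE_SRS = (1 / (1 - α)) * ((∫ x in (0:ℝ)..1, x ^ α) ^ 2 - 1))
    (hM : CE_MRSSU = (1 / (1 - α)) *
      ((∫ x in (0:ℝ)..1, x ^ α) * (∫ x in (0:ℝ)..1, x ^ (2 * α)) - 1)) :
    CE_MRSSU - CE_SRS = α / ((α ^ 2 - 1) * (2 * α + 1) * (α + 1)) ∧
    (α < 1 → CE_MRSSU - CE_SRS < 0) ∧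
    (1 < α → 0 < CE_MRSSU - CE_SRS) := by
  have hdiff : CE_MRSSU - CE_SRS = α / ((α ^ 2 - 1) * (2 * α + 1) * (α + 1)) := by
    rw [hM, hS, cte_mrssu_uniform (by linarith) hα1, cte_srs_uniform (by linarith) hα1]
    exact cte_closed_forms_sub _ (by linarith) (by linarith)
  refine ⟨hdiff, fun hlt => ?_, fun hgt => ?_⟩
  · have hsq : α ^ 2 - 1 < 0 := by nlinarith
    rw [hdiff]
    refine div_neg_of_pos_of_neg hα (mul_neg_of_neg_of_pos ?_ (by linarith))
    exact mul_neg_of_neg_of_pos hsq (by linarith)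
  · have hsq : 0 < α ^ 2 - 1 := by nlinarith
    rw [hdiff]
    positivity
end
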